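/- arXiv:1903.02637 — 2 statements merged into one kernel-verified Lean document; each statement's English description precedes it below -/
import Mathlib

section
/- If CRN C_f stably computes f : ℕ^d → ℕ, CRN C_g stably computes g : ℕ → ℕ, and C_f is output-oblivious, then the concatenated CRN C_{g∘f} stably computes the composition g ∘ f : ℕ^d → ℕ. -/
/-- A chemical reaction network with species type `σ`, designated input species
`inputs i` for each of the `d` inputs, an output species, and a leader species. -/
structure CRN (d : ℕ) (σ : Type) [Fintype σ] [DecidableEq σ] where
  /-- Each reaction is a pair `(r, p)` of reactant counts and product counts. -/
  reactions : Finset ((σ → ℕ) × (σ → ℕ))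
  inputs : Fin d → σ
  output : σ
  leader : σ
  inputs_inj : Function.Injective inputs
  leader_not_input : ∀ i, inputs i ≠ leader

namespace CRN

variable {d : ℕ} {σ : Type} [Fintype σ] [DecidableEq σ]

/-- One reaction step: some reaction `(r, p)` with `r ≤ c` pointwise fires,
yielding `c - r + p`. -/
def Step (C : CRN d σ) (c c' : σ → ℕ) : Prop :=
  ∃ rp ∈ C.reactions, rp.1 ≤ c ∧ c' = c - rp.1 + rp.2

/-- Reachability by a finite sequence of reaction steps. -/
def Reachable (C : CRN d σ) : (σ → ℕ) → (σ → ℕ) → Prop :=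
  Relation.ReflTransGen C.Step

/-- The initial configuration encoding input `x`: count `x i` of input species
`inputs i`, count 1 of the leader, count 0 of everything else. -/
def init (C : CRN d σ) (x : Fin d → ℕ) : σ → ℕ :=
  fun s => (∑ i, if C.inputs i = s then x i else 0) + (if s = C.leader then 1 else 0)

/-- A configuration is stable if the output count never changes from it. -/
def Stable (C : CRN d σ) (c : σ → ℕ) : Prop :=
  ∀ c', C.Reachable c c' → c' C.output = c C.output

/-- `C` stably computes `f` if from every configuration reachable from an initial
configuration, a stable configuration with correct output count is reachable. -/
def StablyComputes (C : CRN d σ) (f : (Fin d → ℕ) → ℕ) : Prop :=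
  ∀ x c, C.Reachable (C.init x) c →
    ∃ o, C.Reachable c o ∧ C.Stable o ∧ o C.output = f x

/-- A CRN is output-oblivious if the output species is never a reactant. -/
def OutputOblivious (C : CRN d σ) : Prop :=
  ∀ rp ∈ C.reactions, rp.1 C.output = 0

/-- A CRN is output-monotonic if no reaction decreases the output species count. -/
def OutputMonotonic (C : CRN d σ) : Prop :=
  ∀ rp ∈ C.reactions, rp.1 C.output ≤ rp.2 C.output

end CRN

/-- `f` is obliviously-computable if some output-oblivious CRN stably computes it. -/
def ObliviouslyComputable {d : ℕ} (f : (Fin d → ℕ) → ℕ) : Prop :=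
  ∃ (n : ℕ) (C : CRN d (Fin n)), C.OutputOblivious ∧ C.StablyComputes f

/-- Push a count vector forward along a species renaming `e`. -/
def pushConfig {σ τ : Type} [Fintype σ] [DecidableEq τ] (e : σ → τ) (v : σ → ℕ) :
    τ → ℕ :=
  fun t => ∑ s, if e s = t then v s else 0

/-- The species of the concatenation of `Cf` and `Cg`: the species of `Cf`, the
species of `Cg` other than its input species (which is identified with the output
species of `Cf`), and a fresh leader (`none`). -/
abbrev ConcatSpecies {σf σg : Type} [Fintype σg] [DecidableEq σg]
    (Cg : CRN 1 σg) : Type :=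
  Option (σf ⊕ {t : σg // ¬ t = Cg.inputs 0})

/-- Embedding of the species of `Cf` into the concatenated species. -/
def embF {σf σg : Type} [Fintype σg] [DecidableEq σg] (Cg : CRN 1 σg) (s : σf) :
    ConcatSpecies (σf := σf) Cg :=
  some (Sum.inl s)

/-- Embedding of the species of `Cg` into the concatenated species: the input
species of `Cg` is renamed to the output species of `Cf`. -/
def embG {d : ℕ} {σf σg : Type} [Fintype σf] [DecidableEq σf] [Fintype σg]
    [DecidableEq σg] (Cf : CRN d σf) (Cg : CRN 1 σg) (s : σg) :
    ConcatSpecies (σf := σf) Cg :=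
  if h : s = Cg.inputs 0 then some (Sum.inl Cf.output) else some (Sum.inr ⟨s, h⟩)

/-- The concatenated CRN `C_{g∘f}`: the reactions of `Cf` and `Cg` (with the output
species of `Cf` renamed to match the input species of `Cg`, and all other species
disjoint), plus the reaction `L → L^f + L^g` for a fresh leader `L`.  Its inputs are
those of `Cf`, its output is that of `Cg`, and its leader is `L`. -/
def concatCRN {d : ℕ} {σf σg : Type} [Fintype σf] [DecidableEq σf] [Fintype σg]
    [DecidableEq σg] (Cf : CRN d σf) (Cg : CRN 1 σg) :
    CRN d (ConcatSpecies (σf := σf) Cg) where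
  reactions :=
    (Cf.reactions.image fun rp =>
      (pushConfig (embF Cg) rp.1, pushConfig (embF Cg) rp.2)) ∪
    (Cg.reactions.image fun rp =>
      (pushConfig (embG Cf Cg) rp.1, pushConfig (embG Cf Cg) rp.2)) ∪
    {(Pi.single none 1,
      Pi.single (embF Cg Cf.leader) 1 + Pi.single (embG Cf Cg Cg.leader) 1)}
  inputs := fun i => embF Cg (Cf.inputs i)
  output := embG Cf Cg Cg.output
  leader := none
  inputs_inj := by
    intro i j hij
    exact Cf.inputs_inj (by simpa [embF] using hij)
  leader_not_input := by
    intro i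
    simp [embF]

/-!
Run the two computations side by side. Once the leader has split, a configuration of the
concatenation is described by a configuration `a` of `C_f` reachable from the input together with
a configuration of `C_g` reachable from the initial one with input `a W`, where `a W` counts all
the `W` ever produced: as `C_f` never consumes `W`, and adding molecules preserves reachability,
`C_g` may be pretended to have received each `W` at the start. Let `C_f` run to a stable
configuration, whose count of `W` is `f x`, and then `C_g` to a stable one with output `g (f x)`.
From there a reaction of `C_f` cannot produce `W` without changing the stable output of `C_f`, so
the `C_g`-part only moves along runs of `C_g` and the output no longer changes.
-/

open Function

namespace CRN

variable {d : ℕ} {σ : Type} [Fintype σ] [DecidableEq σ] {C : CRN d σ}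

theorem Step.add_right {u v : σ → ℕ} (h : C.Step u v) (w : σ → ℕ) :
    C.Step (u + w) (v + w) := by
  obtain ⟨rp, hrp, hle, rfl⟩ := h
  refine ⟨rp, hrp, hle.trans le_self_add, funext fun s => ?_⟩
  have := Pi.le_def.mp hle s
  simp only [Pi.add_apply, Pi.sub_apply]
  omega

theorem Reachable.add_right {u v : σ → ℕ} (h : C.Reachable u v) (w : σ → ℕ) :
    C.Reachable (u + w) (v + w) :=
  Relation.ReflTransGen.lift (· + w) (fun _ _ hs => hs.add_right w) _ _ h

theorem OutputOblivious.output_le_of_reachable (hob : C.OutputOblivious) {u v : σ → ℕ}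
    (h : C.Reachable u v) : u C.output ≤ v C.output := by
  induction h with
  | refl => rfl
  | tail _ hs ih =>
    obtain ⟨rp, hrp, -, rfl⟩ := hs
    simp only [Pi.add_apply, Pi.sub_apply, hob rp hrp]
    omega

theorem init_add_single (x : Fin d → ℕ) (i : Fin d) (m : ℕ) :
    C.init (x + Pi.single i m) = C.init x + Pi.single (C.inputs i) m := by
  funext s
  have hsingle : (∑ j, if C.inputs j = s then Pi.single i m j else 0) =
      if C.inputs i = s then m else 0 :=
    (Finset.sum_eq_single i (fun j _ hj => by simp [hj]) (by simp)).trans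
      (by simp)
  simp only [init, Pi.add_apply, ite_add_zero, Finset.sum_add_distrib]
  rw [hsingle, Pi.single_apply]
  simp only [eq_comm (a := s)]
  omega

theorem init_const_add_single (C : CRN 1 σ) (n m : ℕ) :
    C.init (fun _ => n) + Pi.single (C.inputs 0) m = C.init fun _ => n + m := by
  rw [← init_add_single]
  congr
  funext i
  simp [Fin.fin_one_eq_zero i]

end CRN

section pushConfig

variable {σ τ : Type} [Fintype σ] [DecidableEq τ] {e : σ → τ}

theorem pushConfig_apply_of_injective (he : Injective e) (v : σ → ℕ) (s : σ) :
    pushConfig e v (e s) = v s := by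
  rw [pushConfig, Finset.sum_eq_single s (fun s' _ hs' => by simp [he.ne hs']) (by simp)]
  simp

theorem pushConfig_apply_of_forall_ne (v : σ → ℕ) {t : τ} (h : ∀ s, e s ≠ t) :
    pushConfig e v t = 0 :=
  Finset.sum_eq_zero fun s _ => if_neg (h s)

theorem pushConfig_le_iff (he : Injective e) {r : σ → ℕ} {c : τ → ℕ} :
    pushConfig e r ≤ c ↔ r ≤ c ∘ e := by
  refine ⟨fun h s => ?_, fun h t => ?_⟩
  · simpa [pushConfig_apply_of_injective he] using h (e s)
  · by_cases ht : ∃ s, e s = t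
    · obtain ⟨s, rfl⟩ := ht
      simpa [pushConfig_apply_of_injective he] using h s
    · simp [pushConfig_apply_of_forall_ne r (fun s hs => ht ⟨s, hs⟩)]

theorem comp_sub_pushConfig_add_pushConfig (he : Injective e) (c : τ → ℕ) (r p : σ → ℕ) :
    (c - pushConfig e r + pushConfig e p) ∘ e = c ∘ e - r + p := by
  funext s
  simp [pushConfig_apply_of_injective he]

theorem sub_pushConfig_add_pushConfig_apply_of_forall_ne (c : τ → ℕ) (r p : σ → ℕ)
    {t : τ} (h : ∀ s, e s ≠ t) : (c - pushConfig e r + pushConfig e p) t = c t := by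
  simp [pushConfig_apply_of_forall_ne _ h]

end pushConfig

namespace concatCRN

theorem embF_injective {σf σg : Type} [Fintype σg] [DecidableEq σg] (Cg : CRN 1 σg) :
    Injective (embF (σf := σf) Cg) := fun _ _ h => by
  simpa [embF] using h

theorem embF_ne_none {σf σg : Type} [Fintype σg] [DecidableEq σg] (Cg : CRN 1 σg) (s : σf) :
    embF Cg s ≠ none := by
  simp [embF]

variable {d : ℕ} {σf σg : Type} [Fintype σf] [DecidableEq σf] [Fintype σg] [DecidableEq σg]
  {Cf : CRN d σf} {Cg : CRN 1 σg}

variable (Cf Cg) in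
theorem embG_injective : Injective (embG Cf Cg) := by
  intro s s' h
  unfold embG at h
  split_ifs at h with hs hs' hs' <;> simp_all

variable (Cf Cg) in
theorem embG_ne_none (s : σg) : embG Cf Cg s ≠ none := by
  unfold embG
  split_ifs <;> simp

variable (Cf Cg) in
theorem embG_inputs_zero : embG Cf Cg (Cg.inputs 0) = embF Cg Cf.output := by
  simp [embG, embF]

variable (Cf Cg) in
theorem embG_ne_embF {s : σf} (hs : s ≠ Cf.output) (s' : σg) :
    embG Cf Cg s' ≠ embF Cg s := by
  unfold embG embF
  split_ifs <;> simp [Ne.symm hs]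

variable (Cf Cg) in
theorem embF_ne_embG {s : σg} (hs : s ≠ Cg.inputs 0) (s' : σf) :
    embF Cg s' ≠ embG Cf Cg s := by
  simp [embG, embF, hs]

variable (Cf Cg) in
def leaderProducts : ConcatSpecies (σf := σf) Cg → ℕ :=
  Pi.single (embF Cg Cf.leader) 1 + Pi.single (embG Cf Cg Cg.leader) 1

theorem step_cases {c c' : ConcatSpecies (σf := σf) Cg → ℕ}
    (h : (concatCRN Cf Cg).Step c c') :
    (∃ rp ∈ Cf.reactions, rp.1 ≤ c ∘ embF Cg ∧
      c' = c - pushConfig (embF Cg) rp.1 + pushConfig (embF Cg) rp.2) ∨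
    (∃ rp ∈ Cg.reactions, rp.1 ≤ c ∘ embG Cf Cg ∧
      c' = c - pushConfig (embG Cf Cg) rp.1 + pushConfig (embG Cf Cg) rp.2) ∨
    (Pi.single none 1 ≤ c ∧ c' = c - Pi.single none 1 + leaderProducts Cf Cg) := by
  obtain ⟨rp', hrp', hle, rfl⟩ := h
  simp only [concatCRN, Finset.mem_union, Finset.mem_image, Finset.mem_singleton] at hrp'
  rcases hrp' with (⟨rp, hrp, rfl⟩ | ⟨rp, hrp, rfl⟩) | rfl
  · exact .inl ⟨rp, hrp, (pushConfig_le_iff (embF_injective Cg)).1 hle, rfl⟩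
  · exact .inr (.inl ⟨rp, hrp, (pushConfig_le_iff (embG_injective Cf Cg)).1 hle, rfl⟩)
  · exact .inr (.inr ⟨hle, rfl⟩)

theorem step_left {rp : (σf → ℕ) × (σf → ℕ)} (hrp : rp ∈ Cf.reactions)
    {c : ConcatSpecies (σf := σf) Cg → ℕ} (hle : rp.1 ≤ c ∘ embF Cg) :
    (concatCRN Cf Cg).Step c (c - pushConfig (embF Cg) rp.1 + pushConfig (embF Cg) rp.2) :=
  ⟨_, Finset.mem_union_left _ (Finset.mem_union_left _ (Finset.mem_image_of_mem _ hrp)),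
    (pushConfig_le_iff (embF_injective Cg)).2 hle, rfl⟩

theorem step_right {rp : (σg → ℕ) × (σg → ℕ)} (hrp : rp ∈ Cg.reactions)
    {c : ConcatSpecies (σf := σf) Cg → ℕ} (hle : rp.1 ≤ c ∘ embG Cf Cg) :
    (concatCRN Cf Cg).Step c
      (c - pushConfig (embG Cf Cg) rp.1 + pushConfig (embG Cf Cg) rp.2) :=
  ⟨_, Finset.mem_union_left _ (Finset.mem_union_right _ (Finset.mem_image_of_mem _ hrp)),
    (pushConfig_le_iff (embG_injective Cf Cg)).2 hle, rfl⟩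

theorem le_comp_embF_iff {r a : σf → ℕ} (hr : r Cf.output = 0)
    {c : ConcatSpecies (σf := σf) Cg → ℕ} (hc : ∀ s ≠ Cf.output, c (embF Cg s) = a s) :
    r ≤ c ∘ embF Cg ↔ r ≤ a := by
  refine forall_congr' fun s => ?_
  by_cases hs : s = Cf.output
  · simp [hs, hr]
  · simp [hc s hs]

theorem apply_embF_after_left {r p a : σf → ℕ} {c : ConcatSpecies (σf := σf) Cg → ℕ}
    (hc : ∀ s ≠ Cf.output, c (embF Cg s) = a s) {s : σf} (hs : s ≠ Cf.output) :
    (c - pushConfig (embF Cg) r + pushConfig (embF Cg) p) (embF Cg s) = (a - r + p) s := by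
  simp [pushConfig_apply_of_injective (embF_injective Cg), hc s hs]

theorem comp_embG_after_left {r p : σf → ℕ} (hr : r Cf.output = 0)
    (c : ConcatSpecies (σf := σf) Cg → ℕ) :
    (c - pushConfig (embF Cg) r + pushConfig (embF Cg) p) ∘ embG Cf Cg =
      c ∘ embG Cf Cg + Pi.single (Cg.inputs 0) (p Cf.output) := by
  funext s
  by_cases hs : s = Cg.inputs 0
  · subst hs
    simp [embG_inputs_zero, pushConfig_apply_of_injective (embF_injective Cg), hr]
  · simp [sub_pushConfig_add_pushConfig_apply_of_forall_ne _ _ _ (embF_ne_embG Cf Cg hs), hs]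

theorem apply_embF_after_right {r p : σg → ℕ} (c : ConcatSpecies (σf := σf) Cg → ℕ)
    {s : σf} (hs : s ≠ Cf.output) :
    (c - pushConfig (embG Cf Cg) r + pushConfig (embG Cf Cg) p) (embF Cg s) = c (embF Cg s) :=
  sub_pushConfig_add_pushConfig_apply_of_forall_ne _ _ _ (embG_ne_embF Cf Cg hs)

theorem exists_reachable_of_reachable_left (hob : Cf.OutputOblivious) {a a' : σf → ℕ}
    (h : Cf.Reachable a a') {c : ConcatSpecies (σf := σf) Cg → ℕ}
    (hc : ∀ s ≠ Cf.output, c (embF Cg s) = a s) :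
    ∃ c', (concatCRN Cf Cg).Reachable c c' ∧ c' none = c none ∧
      (∀ s ≠ Cf.output, c' (embF Cg s) = a' s) ∧
      c' ∘ embG Cf Cg =
        c ∘ embG Cf Cg + Pi.single (Cg.inputs 0) (a' Cf.output - a Cf.output) := by
  induction h with
  | refl => exact ⟨c, .refl, rfl, hc, by simp⟩
  | @tail a₁ a₂ haa₁ ha₁a₂ ih =>
    obtain ⟨c₁, hcc₁, hnone, hc₁, hg⟩ := ih
    obtain ⟨rp, hrp, hle, rfl⟩ := ha₁a₂
    have hr := hob rp hrp
    have hmono := hob.output_le_of_reachable haa₁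
    refine ⟨_, hcc₁.tail (step_left hrp ((le_comp_embF_iff hr hc₁).2 hle)), ?_,
      fun s hs => apply_embF_after_left hc₁ hs, ?_⟩
    · rw [sub_pushConfig_add_pushConfig_apply_of_forall_ne _ _ _ (embF_ne_none Cg), hnone]
    · rw [comp_embG_after_left hr, hg, add_assoc, ← Pi.single_add]
      simp only [Pi.add_apply, Pi.sub_apply, hr]
      congr 2
      omega

theorem exists_reachable_of_reachable_right {b b' : σg → ℕ} (h : Cg.Reachable b b')
    {c : ConcatSpecies (σf := σf) Cg → ℕ} (hc : c ∘ embG Cf Cg = b) :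
    ∃ c', (concatCRN Cf Cg).Reachable c c' ∧ c' none = c none ∧
      (∀ s ≠ Cf.output, c' (embF Cg s) = c (embF Cg s)) ∧ c' ∘ embG Cf Cg = b' := by
  induction h with
  | refl => exact ⟨c, .refl, rfl, fun _ _ => rfl, hc⟩
  | tail _ hb₁b₂ ih =>
    obtain ⟨c₁, hcc₁, hnone, hc₁, hg⟩ := ih
    obtain ⟨rp, hrp, hle, rfl⟩ := hb₁b₂
    refine ⟨_, hcc₁.tail (step_right hrp (hg ▸ hle)), ?_,
      fun s hs => (apply_embF_after_right c₁ hs).trans (hc₁ s hs), ?_⟩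
    · rw [sub_pushConfig_add_pushConfig_apply_of_forall_ne _ _ _ (embG_ne_none Cf Cg), hnone]
    · rw [comp_sub_pushConfig_add_pushConfig (embG_injective Cf Cg), hg]

theorem exists_runs_of_step (hob : Cf.OutputOblivious)
    {c c' : ConcatSpecies (σf := σf) Cg → ℕ} (h : (concatCRN Cf Cg).Step c c')
    (h0 : c none = 0) {a : σf → ℕ}
    (hc : ∀ s ≠ Cf.output, c (embF Cg s) = a s) :
    c' none = 0 ∧ ∃ a', Cf.Reachable a a' ∧ (∀ s ≠ Cf.output, c' (embF Cg s) = a' s) ∧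
      Cg.Reachable (c ∘ embG Cf Cg + Pi.single (Cg.inputs 0) (a' Cf.output - a Cf.output))
        (c' ∘ embG Cf Cg) := by
  rcases step_cases h with ⟨rp, hrp, hle, rfl⟩ | ⟨rp, hrp, hle, rfl⟩ | ⟨hle, -⟩
  · have hr := hob rp hrp
    refine ⟨by rw [sub_pushConfig_add_pushConfig_apply_of_forall_ne _ _ _ (embF_ne_none Cg), h0],
      a - rp.1 + rp.2, .single ⟨rp, hrp, (le_comp_embF_iff hr hc).1 hle, rfl⟩,
      fun s hs => apply_embF_after_left hc hs, ?_⟩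
    rw [comp_embG_after_left hr]
    simpa [hr] using .refl
  · refine ⟨?_, a, .refl, fun s hs => (apply_embF_after_right c hs).trans (hc s hs), ?_⟩
    · rw [sub_pushConfig_add_pushConfig_apply_of_forall_ne _ _ _ (embG_ne_none Cf Cg), h0]
    · rw [comp_sub_pushConfig_add_pushConfig (embG_injective Cf Cg)]
      simpa using .single ⟨rp, hrp, hle, rfl⟩
  · simpa [h0] using hle none

theorem exists_runs_of_reachable (hob : Cf.OutputOblivious)
    {c₀ c : ConcatSpecies (σf := σf) Cg → ℕ} (h : (concatCRN Cf Cg).Reachable c₀ c)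
    (h0 : c₀ none = 0) {a₀ : σf → ℕ}
    (hc₀ : ∀ s ≠ Cf.output, c₀ (embF Cg s) = a₀ s) :
    c none = 0 ∧ ∃ a, Cf.Reachable a₀ a ∧ (∀ s ≠ Cf.output, c (embF Cg s) = a s) ∧
      Cg.Reachable (c₀ ∘ embG Cf Cg + Pi.single (Cg.inputs 0) (a Cf.output - a₀ Cf.output))
        (c ∘ embG Cf Cg) := by
  induction h with
  | refl => exact ⟨h0, a₀, .refl, hc₀, by simpa using .refl⟩
  | tail _ hc₁c₂ ih =>
    obtain ⟨h₁0, a₁, ha₀a₁, hc₁, hg₁⟩ := ih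
    obtain ⟨h₂0, a₂, ha₁a₂, hc₂, hg₂⟩ := exists_runs_of_step hob hc₁c₂ h₁0 hc₁
    refine ⟨h₂0, a₂, ha₀a₁.trans ha₁a₂, hc₂, .trans ?_ hg₂⟩
    have h₀₁ := hob.output_le_of_reachable ha₀a₁
    have h₁₂ := hob.output_le_of_reachable ha₁a₂
    have hsplit : a₂ Cf.output - a₀ Cf.output =
        (a₁ Cf.output - a₀ Cf.output) + (a₂ Cf.output - a₁ Cf.output) := by omega
    rw [hsplit, Pi.single_add, ← add_assoc]
    exact hg₁.add_right _

theorem step_cases_leader {c c' : ConcatSpecies (σf := σf) Cg → ℕ}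
    (h : (concatCRN Cf Cg).Step c c') :
    (∃ rp ∈ (concatCRN Cf Cg).reactions, rp.1 none = 0 ∧ rp.2 none = 0 ∧ rp.1 ≤ c ∧
      c' = c - rp.1 + rp.2) ∨
    (Pi.single none 1 ≤ c ∧ c' = c - Pi.single none 1 + leaderProducts Cf Cg) := by
  obtain ⟨rp, hrp, hle, rfl⟩ := h
  have hmem := hrp
  simp only [concatCRN, Finset.mem_union, Finset.mem_image, Finset.mem_singleton] at hmem
  rcases hmem with (⟨rp', -, rfl⟩ | ⟨rp', -, rfl⟩) | rfl
  · exact .inl ⟨_, hrp, pushConfig_apply_of_forall_ne _ (embF_ne_none Cg),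
      pushConfig_apply_of_forall_ne _ (embF_ne_none Cg), hle, rfl⟩
  · exact .inl ⟨_, hrp, pushConfig_apply_of_forall_ne _ (embG_ne_none Cf Cg),
      pushConfig_apply_of_forall_ne _ (embG_ne_none Cf Cg), hle, rfl⟩
  · exact .inr ⟨hle, rfl⟩

theorem leaderProducts_none : leaderProducts Cf Cg none = 0 := by
  simp [leaderProducts, embF_ne_none, embG_ne_none]

variable (Cf Cg) in
def firedInit (x : Fin d → ℕ) : ConcatSpecies (σf := σf) Cg → ℕ :=
  (concatCRN Cf Cg).init x - Pi.single none 1 + leaderProducts Cf Cg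

theorem init_none (x : Fin d → ℕ) : (concatCRN Cf Cg).init x none = 1 := by
  simp [CRN.init, concatCRN, embF]

theorem firedInit_none (x : Fin d → ℕ) : firedInit Cf Cg x none = 0 := by
  simp [firedInit, init_none, leaderProducts_none]

theorem firedInit_embF (x : Fin d → ℕ) (s : σf) :
    firedInit Cf Cg x (embF Cg s) = Cf.init x s := by
  have hLg : embG Cf Cg Cg.leader ≠ embF Cg s :=
    (embF_ne_embG Cf Cg (Cg.leader_not_input 0).symm s).symm
  simp [firedInit, leaderProducts, CRN.init, concatCRN, Pi.single_apply, (embF_injective Cg).eq_iff,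
    hLg, embF_ne_none, eq_comm (a := s)]

theorem firedInit_comp_embG (x : Fin d → ℕ) :
    firedInit Cf Cg x ∘ embG Cf Cg = Cg.init fun _ => Cf.init x Cf.output := by
  funext s
  by_cases hs : s = Cg.inputs 0
  · subst hs
    simp [embG_inputs_zero, firedInit_embF, CRN.init, Cg.leader_not_input 0]
  · have hLf : embF Cg Cf.leader ≠ embG Cf Cg s := embF_ne_embG Cf Cg hs _
    simp [firedInit, leaderProducts, CRN.init, concatCRN, Pi.single_apply,
      (embG_injective Cf Cg).eq_iff, hLf, embF_ne_embG Cf Cg hs, embG_ne_none, Ne.symm hs,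
      eq_comm (a := s)]

theorem exists_reachable_firedInit {x : Fin d → ℕ} {c : ConcatSpecies (σf := σf) Cg → ℕ}
    (h : (concatCRN Cf Cg).Reachable ((concatCRN Cf Cg).init x) c) :
    ∃ c₁, (concatCRN Cf Cg).Reachable c c₁ ∧
      (concatCRN Cf Cg).Reachable (firedInit Cf Cg x) c₁ := by
  -- The other reactions never touch the leader, so firing it can be moved to the front.
  have key : (c none = 0 ∧ (concatCRN Cf Cg).Reachable (firedInit Cf Cg x) c) ∨
      (c none = 1 ∧ (concatCRN Cf Cg).Reachable (firedInit Cf Cg x)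
        (c - Pi.single none 1 + leaderProducts Cf Cg)) := by
    induction h with
    | refl => exact .inr ⟨init_none x, .refl⟩
    | tail _ hstep ih =>
      rcases step_cases_leader hstep with ⟨rp, hrp, hr, hp, hle, rfl⟩ | ⟨hle, rfl⟩
      · rcases ih with ⟨h0, hI⟩ | ⟨h1, hI⟩
        · exact .inl ⟨by simp [h0, hr, hp], hI.tail hstep⟩
        · refine .inr ⟨by simp [h1, hr, hp],
            hI.tail ⟨rp, hrp, fun t => ?_, funext fun t => ?_⟩⟩
          all_goals
            have := Pi.le_def.mp hle t
            by_cases ht : t = none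
            · subst ht; simp [hr, hp, leaderProducts_none]
            · simp [ht]; omega
      · rcases ih with ⟨h0, -⟩ | ⟨h1, hI⟩
        · simpa [h0] using hle none
        · exact .inl ⟨by simp [h1, leaderProducts_none], hI⟩
  rcases key with ⟨-, hI⟩ | ⟨h1, hI⟩
  · exact ⟨c, .refl, hI⟩
  · refine ⟨_, .single ⟨(Pi.single none 1, leaderProducts Cf Cg),
      Finset.mem_union_right _ (Finset.mem_singleton_self _), fun t => ?_, rfl⟩, hI⟩
    by_cases ht : t = none
    · subst ht; simp [h1]
    · simp [ht]

variable (Cf Cg) in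
/-- The count of `W` in `a` records all the `W` that `Cf` has produced, whether or not `Cg`
has consumed it since. -/
structure Consistent (x : Fin d → ℕ) (a : σf → ℕ)
    (c : ConcatSpecies (σf := σf) Cg → ℕ) : Prop where
  none_eq_zero : c none = 0
  reachable_left : Cf.Reachable (Cf.init x) a
  eq_left : ∀ s ≠ Cf.output, c (embF Cg s) = a s
  reachable_right : Cg.Reachable (Cg.init fun _ => a Cf.output) (c ∘ embG Cf Cg)

theorem exists_reachable_consistent (hob : Cf.OutputOblivious) {x : Fin d → ℕ}
    {c : ConcatSpecies (σf := σf) Cg → ℕ}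
    (h : (concatCRN Cf Cg).Reachable ((concatCRN Cf Cg).init x) c) :
    ∃ c₁ a, (concatCRN Cf Cg).Reachable c c₁ ∧ Consistent Cf Cg x a c₁ := by
  obtain ⟨c₁, hcc₁, hc₁⟩ := exists_reachable_firedInit h
  obtain ⟨h0, a, hxa, hagree, hg⟩ :=
    exists_runs_of_reachable hob hc₁ (firedInit_none x) fun s _ => firedInit_embF x s
  refine ⟨c₁, a, hcc₁, h0, hxa, hagree, ?_⟩
  rwa [firedInit_comp_embG, CRN.init_const_add_single,
    Nat.add_sub_cancel' (hob.output_le_of_reachable hxa)] at hg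

theorem Consistent.exists_reachable_of_reachable (hob : Cf.OutputOblivious)
    {x : Fin d → ℕ} {a a' : σf → ℕ} {c : ConcatSpecies (σf := σf) Cg → ℕ}
    (hc : Consistent Cf Cg x a c) (h : Cf.Reachable a a') :
    ∃ c', (concatCRN Cf Cg).Reachable c c' ∧ Consistent Cf Cg x a' c' := by
  obtain ⟨c', hcc', hnone, hagree, hg⟩ :=
    exists_reachable_of_reachable_left hob h hc.eq_left
  refine ⟨c', hcc', hnone.trans hc.none_eq_zero, hc.reachable_left.trans h, hagree, ?_⟩
  have hinit : (Cg.init fun _ => a' Cf.output) =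
      (Cg.init fun _ => a Cf.output) + Pi.single (Cg.inputs 0) (a' Cf.output - a Cf.output) := by
    rw [CRN.init_const_add_single, Nat.add_sub_cancel' (hob.output_le_of_reachable h)]
  rw [hg, hinit]
  exact hc.reachable_right.add_right _

theorem stable_of_stable_left_right (hob : Cf.OutputOblivious)
    {c : ConcatSpecies (σf := σf) Cg → ℕ} {a : σf → ℕ} (h0 : c none = 0)
    (hc : ∀ s ≠ Cf.output, c (embF Cg s) = a s)
    (ha : Cf.Stable a) (hb : Cg.Stable (c ∘ embG Cf Cg)) : (concatCRN Cf Cg).Stable c := by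
  intro c' h
  obtain ⟨-, a', haa', -, hg⟩ := exists_runs_of_reachable hob h h0 hc
  rw [ha a' haa', Nat.sub_self, Pi.single_zero, add_zero] at hg
  exact hb _ hg

end concatCRN

/-- If `Cf` stably computes `f`, `Cg` stably computes `g`, and `Cf` is
output-oblivious, then the concatenated CRN stably computes `g ∘ f`. -/
theorem concat_stablyComputes {d : ℕ} {σf σg : Type} [Fintype σf] [DecidableEq σf]
    [Fintype σg] [DecidableEq σg] (Cf : CRN d σf) (Cg : CRN 1 σg)
    (f : (Fin d → ℕ) → ℕ) (g : ℕ → ℕ)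
    (hf : Cf.StablyComputes f) (hg : Cg.StablyComputes fun x : Fin 1 → ℕ => g (x 0))
    (hob : Cf.OutputOblivious) :
    (concatCRN Cf Cg).StablyComputes fun x => g (f x) := by
  intro x c hc
  obtain ⟨c₁, a, hcc₁, h₁⟩ := concatCRN.exists_reachable_consistent hob hc
  obtain ⟨a', haa', ha'_stable, ha'_out⟩ := hf x a h₁.reachable_left
  obtain ⟨c₂, hc₁c₂, h₂⟩ := h₁.exists_reachable_of_reachable hob haa'
  obtain ⟨b, hb, hb_stable, hb_out⟩ := hg (fun _ => f x) _ (ha'_out ▸ h₂.reachable_right)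
  obtain ⟨c₃, hc₂c₃, hnone, hagree, rfl⟩ :=
    concatCRN.exists_reachable_of_reachable_right hb rfl
  refine ⟨c₃, hcc₁.trans (hc₁c₂.trans hc₂c₃), ?_, hb_out⟩
  exact concatCRN.stable_of_stable_left_right hob (hnone.trans h₂.none_eq_zero)
    (fun s hs => (hagree s hs).trans (h₂.eq_left s hs)) ha'_stable hb_stable
end

section
/- Let C_f stably compute f : ℕ^d → ℕ, and suppose that for every CRN C_g stably computing some g : ℕ → ℕ, the concatenated CRN C_{g∘f} stably computes the composition g ∘ f. Then the CRN obtained from C_f by deleting every reaction whose reactant vector has positive count of the output species still stably computes f (and is output-oblivious). -/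
/-- The CRN obtained from `C` by deleting every reaction that consumes the output
species. -/
def removeOutputConsuming {d : ℕ} {σ : Type} [Fintype σ] [DecidableEq σ]
    (C : CRN d σ) : CRN d σ :=
  { C with reactions := C.reactions.filter fun rp => rp.1 C.output = 0 }

/-!
Take for `C_g` the CRN `X → Y`, which stably computes the identity. In the concatenation every
copy of the output `W` of `C_f` can be converted into `Y` at any moment, and no reaction consumes
`Y`. So a configuration reached by the pruned CRN, with all its `W` converted, is reachable in the
concatenation with output equal to its `W` count; hence that count never exceeds `f x`. If it is
below `f x`, the concatenation must still produce a `Y` from the converted configuration, which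
holds no `W`: before the first conversion only reactions not consuming `W` fire, so the pruned CRN
produces a new `W` (the `W` set aside do not hinder it). Thus the pruned CRN can always reach
`W` count `f x`, and being output-oblivious it can never leave it.
-/

theorem Pi.single_le_iff {ι α : Type*} [DecidableEq ι] [AddMonoid α] [PartialOrder α]
    [CanonicallyOrderedAdd α] {f : ι → α} {i : ι} {a : α} : Pi.single i a ≤ f ↔ a ≤ f i := by
  refine ⟨fun h => by simpa using h i, fun h t => ?_⟩
  rcases eq_or_ne t i with rfl | hti
  · simpa using h
  · simp [Pi.single_eq_of_ne hti]

namespace CRN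

variable {d : ℕ} {σ : Type} [Fintype σ] [DecidableEq σ] {C : CRN d σ} {c c' : σ → ℕ}

theorem Step.add_right_s10 (h : C.Step c c') (a : σ → ℕ) : C.Step (c + a) (c' + a) := by
  obtain ⟨rp, hrp, hle, rfl⟩ := h
  refine ⟨rp, hrp, hle.trans le_self_add, funext fun s => ?_⟩
  have hs : rp.1 s ≤ c s := hle s
  simp only [Pi.add_apply, Pi.sub_apply]
  omega

theorem Reachable.add_right_s10 (h : C.Reachable c c') (a : σ → ℕ) :
    C.Reachable (c + a) (c' + a) :=
  Relation.ReflTransGen.lift (· + a) (fun _ _ hs => Step.add_right_s10 hs a) _ _ h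

theorem Reachable.output_le (hC : C.OutputOblivious) (h : C.Reachable c c') :
    c C.output ≤ c' C.output := by
  induction h with
  | refl => rfl
  | tail _ hstep ih =>
    obtain ⟨rp, hrp, -, rfl⟩ := hstep
    simp only [Pi.add_apply, Pi.sub_apply, hC rp hrp]
    omega

theorem removeOutputConsuming_outputOblivious (C : CRN d σ) :
    (removeOutputConsuming C).OutputOblivious :=
  fun _ hrp => (Finset.mem_filter.1 hrp).2

theorem Reachable.of_removeOutputConsuming (h : (removeOutputConsuming C).Reachable c c') :
    C.Reachable c c' :=
  Relation.ReflTransGen.mono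
    (fun _ _ ⟨rp, hrp, hle, he⟩ => ⟨rp, (Finset.mem_filter.1 hrp).1, hle, he⟩) _ _ h

theorem Step.removeOutputConsuming (h : C.Step c c') (hc : c C.output = 0) :
    (removeOutputConsuming C).Step c c' := by
  obtain ⟨rp, hrp, hle, rfl⟩ := h
  exact ⟨rp, Finset.mem_filter.2 ⟨hrp, Nat.eq_zero_of_le_zero (hc ▸ hle C.output)⟩, hle, rfl⟩

def identity : CRN 1 (Fin 3) where
  reactions := {(Pi.single 0 1, Pi.single 1 1)}
  inputs := fun _ => 0
  output := 1
  leader := 2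
  inputs_inj := fun i j _ => Subsingleton.elim i j
  leader_not_input := fun _ => by decide

theorem identity_reactions : identity.reactions = {(Pi.single 0 1, Pi.single 1 1)} := rfl
theorem identity_inputs (i : Fin 1) : identity.inputs i = 0 := rfl
theorem identity_leader : identity.leader = 2 := rfl

theorem identity_step_iff {c c' : Fin 3 → ℕ} :
    identity.Step c c' ↔ 1 ≤ c 0 ∧ c' = c - Pi.single 0 1 + Pi.single 1 1 := by
  simp only [Step, identity, Finset.mem_singleton, exists_eq_left, Pi.single_le_iff]

theorem identity_reachable_init {x : Fin 1 → ℕ} {c : Fin 3 → ℕ}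
    (h : identity.Reachable (identity.init x) c) : c 0 + c 1 = x 0 := by
  induction h with
  | refl => simp [init, identity]
  | tail _ hstep ih =>
    obtain ⟨hc, rfl⟩ := identity_step_iff.1 hstep
    simp only [Pi.add_apply, Pi.sub_apply, Pi.single_eq_same, ne_eq, Fin.reduceEq,
      not_false_eq_true, Pi.single_eq_of_ne]
    omega

theorem identity_reachable_drain (c : Fin 3 → ℕ) :
    ∃ o, identity.Reachable c o ∧ o 0 = 0 ∧ o 1 = c 0 + c 1 := by
  induction h : c 0 generalizing c with
  | zero => exact ⟨c, .refl, h, by omega⟩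
  | succ k ih =>
    obtain ⟨o, ho, ho0, ho1⟩ := ih (c - Pi.single 0 1 + Pi.single 1 1) (by simp [h])
    refine ⟨o, .head (identity_step_iff.2 ⟨by omega, rfl⟩) ho, ho0, ?_⟩
    simp only [ho1, Pi.add_apply, Pi.sub_apply, Pi.single_eq_same, ne_eq, Fin.reduceEq,
      not_false_eq_true, Pi.single_eq_of_ne]
    omega

theorem identity_stable {o : Fin 3 → ℕ} (h : o 0 = 0) : identity.Stable o := by
  intro c hc
  cases hc.cases_head with
  | inl h => rw [h]
  | inr h' =>
    obtain ⟨c', hstep, -⟩ := h'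
    have := (identity_step_iff.1 hstep).1
    omega

theorem identity_stablyComputes : identity.StablyComputes fun x => x 0 := by
  intro x c hc
  obtain ⟨o, ho, ho0, ho1⟩ := identity_reachable_drain c
  exact ⟨o, ho, identity_stable ho0, ho1.trans (identity_reachable_init hc)⟩

end CRN

theorem pushConfig_single {σ τ : Type} [Fintype σ] [DecidableEq σ] [DecidableEq τ]
    (e : σ → τ) (a : σ) (k : ℕ) : pushConfig e (Pi.single a k) = Pi.single (e a) k := by
  funext t
  rw [pushConfig, Finset.sum_eq_single a (fun b _ hb => by simp [hb]) (by simp)]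
  by_cases h : e a = t
  · subst h; simp
  · simp [h]

section ConcatIdentity

open CRN

variable {d : ℕ} {σf : Type} [Fintype σf] [DecidableEq σf] {Cf : CRN d σf}

def concatOutput : ConcatSpecies (σf := σf) identity := some (Sum.inr ⟨1, by decide⟩)

/-- The configuration of `concatCRN Cf identity` after its leader has fired, with `v` on the
species of `Cf`, `n` copies of the output `inr 1` and the leader `inr 2` of `identity`. -/
def concatConfig (v : σf → ℕ) (n : ℕ) : ConcatSpecies (σf := σf) identity → ℕ
  | none => 0
  | some (Sum.inl s) => v s
  | some (Sum.inr t) => if t.1 = 1 then n else 1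

theorem mem_concatCRN_identity_reactions
    {rp : (ConcatSpecies (σf := σf) identity → ℕ) × (ConcatSpecies (σf := σf) identity → ℕ)} :
    rp ∈ (concatCRN Cf identity).reactions ↔
      (∃ r ∈ Cf.reactions,
        (pushConfig (embF identity) r.1, pushConfig (embF identity) r.2) = rp) ∨
      rp = (Pi.single (some (Sum.inl Cf.output)) 1, Pi.single concatOutput 1) ∨
      rp = (Pi.single none 1,
        Pi.single (some (Sum.inl Cf.leader)) 1 + Pi.single (some (Sum.inr ⟨2, by decide⟩)) 1) := by
  unfold concatCRN
  rw [Finset.mem_union, Finset.mem_union, Finset.mem_image, identity_reactions,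
    Finset.image_singleton, Finset.mem_singleton, Finset.mem_singleton, pushConfig_single,
    pushConfig_single, identity_leader]
  simp only [embG, embF, concatOutput, identity_inputs, ↓reduceDIte, Fin.reduceEq, or_assoc]
  exact Iff.rfl

@[simp] theorem pushConfig_embF_apply_none (v : σf → ℕ) :
    pushConfig (embF (σf := σf) identity) v none = 0 := by
  simp [pushConfig, embF]

@[simp] theorem pushConfig_embF_apply_inl (v : σf → ℕ) (s : σf) :
    pushConfig (embF identity) v (some (Sum.inl s)) = v s := by
  simp [pushConfig, embF]

@[simp] theorem pushConfig_embF_apply_inr (v : σf → ℕ) (t : {t : Fin 3 // ¬t = identity.inputs 0}) :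
    pushConfig (embF (σf := σf) identity) v (some (Sum.inr t)) = 0 := by
  simp [pushConfig, embF]

theorem pushConfig_embF_le_concatConfig {r v : σf → ℕ} {n : ℕ} :
    pushConfig (embF identity) r ≤ concatConfig v n ↔ r ≤ v := by
  refine ⟨fun h s => by simpa [concatConfig] using h (some (Sum.inl s)), fun h t => ?_⟩
  rcases t with _ | s | t
  · simp [concatConfig]
  · simpa [concatConfig] using h s
  · simp

theorem concatConfig_sub_add_pushConfig {r p v : σf → ℕ} (n : ℕ) :
    concatConfig v n - pushConfig (embF identity) r + pushConfig (embF identity) p =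
      concatConfig (v - r + p) n := by
  funext t
  rcases t with _ | s | t <;> simp [concatConfig]

theorem concatConfig_convert (v : σf → ℕ) (n : ℕ) :
    concatConfig v n - Pi.single (some (Sum.inl Cf.output)) 1 + Pi.single concatOutput 1 =
      concatConfig (v - Pi.single Cf.output 1) (n + 1) := by
  funext t
  rcases t with _ | s | ⟨t, ht⟩
  · simp [concatConfig, concatOutput]
  · rcases eq_or_ne s Cf.output with rfl | hs <;> simp [concatConfig, concatOutput, *]
  · fin_cases t
    · exact absurd rfl ht
    all_goals simp [concatConfig, concatOutput]

theorem concatCRN_identity_init_fire_leader (x : Fin d → ℕ) :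
    (concatCRN Cf identity).init x - Pi.single none 1 +
        (Pi.single (some (Sum.inl Cf.leader)) 1 + Pi.single (some (Sum.inr ⟨2, by decide⟩)) 1) =
      concatConfig (Cf.init x) 0 := by
  funext t
  rcases t with _ | s | ⟨t, ht⟩
  · simp [concatConfig, init, concatCRN, embF]
  · simp [concatConfig, init, concatCRN, embF, Pi.single_apply]
  · fin_cases t
    · exact absurd rfl ht
    all_goals simp [concatConfig, init, concatCRN, embF]

theorem concatCRN_identity_output : (concatCRN Cf identity).output = concatOutput := rfl

@[simp] theorem concatConfig_output (v : σf → ℕ) (n : ℕ) :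
    concatConfig v n (concatCRN Cf identity).output = n := by
  simp [concatCRN_identity_output, concatConfig, concatOutput]

theorem concatCRN_identity_outputOblivious : (concatCRN Cf identity).OutputOblivious := by
  intro rp hrp
  rw [concatCRN_identity_output]
  rcases mem_concatCRN_identity_reactions.1 hrp with ⟨r, -, rfl⟩ | rfl | rfl <;>
    simp [concatOutput]

theorem CRN.Step.concatCRN_identity {v v' : σf → ℕ} (h : Cf.Step v v') (n : ℕ) :
    (concatCRN Cf identity).Step (concatConfig v n) (concatConfig v' n) := by
  obtain ⟨rp, hrp, hle, rfl⟩ := h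
  exact ⟨_, mem_concatCRN_identity_reactions.2 (Or.inl ⟨rp, hrp, rfl⟩),
    pushConfig_embF_le_concatConfig.2 hle, (concatConfig_sub_add_pushConfig n).symm⟩

theorem CRN.Reachable.concatCRN_identity {v v' : σf → ℕ} (h : Cf.Reachable v v') (n : ℕ) :
    (concatCRN Cf identity).Reachable (concatConfig v n) (concatConfig v' n) :=
  Relation.ReflTransGen.lift (concatConfig · n) (fun _ _ hs => hs.concatCRN_identity n) _ _ h

theorem concatCRN_identity_step_convert {v : σf → ℕ} (hv : 1 ≤ v Cf.output) (n : ℕ) :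
    (concatCRN Cf identity).Step (concatConfig v n)
      (concatConfig (v - Pi.single Cf.output 1) (n + 1)) :=
  ⟨_, mem_concatCRN_identity_reactions.2 (Or.inr (Or.inl rfl)),
    Pi.single_le_iff.2 (by simpa [concatConfig] using hv), (concatConfig_convert v n).symm⟩

theorem concatCRN_identity_step_init (x : Fin d → ℕ) :
    (concatCRN Cf identity).Step ((concatCRN Cf identity).init x) (concatConfig (Cf.init x) 0) :=
  ⟨_, mem_concatCRN_identity_reactions.2 (Or.inr (Or.inr rfl)),
    Pi.single_le_iff.2 (by simp [init, concatCRN, embF]),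
    (concatCRN_identity_init_fire_leader x).symm⟩

theorem concatCRN_identity_step_cases {v : σf → ℕ} {n : ℕ} {e : ConcatSpecies identity → ℕ}
    (h : (concatCRN Cf identity).Step (concatConfig v n) e) :
    (∃ v', Cf.Step v v' ∧ e = concatConfig v' n) ∨
      (1 ≤ v Cf.output ∧ e = concatConfig (v - Pi.single Cf.output 1) (n + 1)) := by
  obtain ⟨rp, hrp, hle, rfl⟩ := h
  rcases mem_concatCRN_identity_reactions.1 hrp with ⟨r, hr, rfl⟩ | rfl | rfl
  · exact Or.inl ⟨_, ⟨r, hr, pushConfig_embF_le_concatConfig.1 hle, rfl⟩,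
      concatConfig_sub_add_pushConfig n⟩
  · exact Or.inr ⟨by simpa [concatConfig] using Pi.single_le_iff.1 hle, concatConfig_convert v n⟩
  · simpa [concatConfig] using Pi.single_le_iff.1 hle

theorem concatCRN_identity_reachable_convert (v : σf → ℕ) (n : ℕ) :
    (concatCRN Cf identity).Reachable (concatConfig v n)
      (concatConfig (Function.update v Cf.output 0) (n + v Cf.output)) := by
  induction h : v Cf.output generalizing v n with
  | zero =>
    rw [Nat.add_zero, ← h, Function.update_eq_self]
    exact .refl
  | succ k ih =>
    have hupdate : Function.update (v - Pi.single Cf.output 1) Cf.output 0 =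
        Function.update v Cf.output 0 := by
      ext s
      rcases eq_or_ne s Cf.output with rfl | hs <;> simp [*]
    have := ih (v - Pi.single Cf.output 1) (n + 1) (by simp [h])
    rw [hupdate, add_assoc, add_comm 1] at this
    exact .head (concatCRN_identity_step_convert (by omega) n) this

theorem concatCRN_identity_reachable_of_reachable {x : Fin d → ℕ} {v : σf → ℕ}
    (hv : Cf.Reachable (Cf.init x) v) :
    (concatCRN Cf identity).Reachable ((concatCRN Cf identity).init x)
      (concatConfig (Function.update v Cf.output 0) (v Cf.output)) := by
  have hconvert := concatCRN_identity_reachable_convert (Cf := Cf) v 0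
  rw [zero_add] at hconvert
  exact .head (concatCRN_identity_step_init x) ((hv.concatCRN_identity 0).trans hconvert)

theorem exists_reachable_output_pos_of_concatCRN_identity {v : σf → ℕ} {n : ℕ}
    {e : ConcatSpecies identity → ℕ} (h : (concatCRN Cf identity).Reachable (concatConfig v n) e)
    (he : n < e (concatCRN Cf identity).output) (hv : v Cf.output = 0) :
    ∃ v', (removeOutputConsuming Cf).Reachable v v' ∧ 0 < v' Cf.output := by
  suffices ∀ c, (concatCRN Cf identity).Reachable c e → ∀ v, c = concatConfig v n →
      v Cf.output = 0 → ∃ v', (removeOutputConsuming Cf).Reachable v v' ∧ 0 < v' Cf.output from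
    this _ h v rfl hv
  intro c hc
  induction hc using Relation.ReflTransGen.head_induction_on with
  | refl =>
    rintro v rfl -
    simp at he
  | head hstep _ ih =>
    rintro v rfl hv
    rcases concatCRN_identity_step_cases hstep with ⟨v', hvv', rfl⟩ | ⟨hpos, -⟩
    · have hstep' := hvv'.removeOutputConsuming hv
      rcases Nat.eq_zero_or_pos (v' Cf.output) with hz | hp
      · obtain ⟨w, hw, hwpos⟩ := ih v' rfl hz
        exact ⟨w, .head hstep' hw, hwpos⟩
      · exact ⟨v', .single hstep', hp⟩
    · omega

end ConcatIdentity

section Composable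

open CRN

variable {d : ℕ} {σf : Type} [Fintype σf] [DecidableEq σf] {Cf : CRN d σf}
  {f : (Fin d → ℕ) → ℕ} {x : Fin d → ℕ} {v : σf → ℕ}

theorem output_le_of_reachable_removeOutputConsuming
    (hD : (concatCRN Cf identity).StablyComputes f)
    (hv : (removeOutputConsuming Cf).Reachable (Cf.init x) v) : v Cf.output ≤ f x := by
  obtain ⟨o, ho, -, hox⟩ :=
    hD x _ (concatCRN_identity_reachable_of_reachable hv.of_removeOutputConsuming)
  simpa [hox] using ho.output_le concatCRN_identity_outputOblivious

theorem exists_reachable_removeOutputConsuming_output_gt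
    (hD : (concatCRN Cf identity).StablyComputes f)
    (hv : (removeOutputConsuming Cf).Reachable (Cf.init x) v) (hlt : v Cf.output < f x) :
    ∃ v', (removeOutputConsuming Cf).Reachable v v' ∧ v Cf.output < v' Cf.output := by
  obtain ⟨o, ho, -, hox⟩ :=
    hD x _ (concatCRN_identity_reachable_of_reachable hv.of_removeOutputConsuming)
  obtain ⟨u, hu, hupos⟩ := exists_reachable_output_pos_of_concatCRN_identity ho
    (by rw [hox]; exact hlt) (Function.update_self _ _ _)
  have hsplit : Function.update v Cf.output 0 + Pi.single Cf.output (v Cf.output) = v := by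
    ext s
    rcases eq_or_ne s Cf.output with rfl | hs <;> simp [*]
  refine ⟨u + Pi.single Cf.output (v Cf.output), ?_, by simpa using hupos⟩
  simpa [hsplit] using hu.add_right_s10 (Pi.single Cf.output (v Cf.output))

theorem exists_reachable_removeOutputConsuming_output_eq
    (hD : (concatCRN Cf identity).StablyComputes f)
    (hv : (removeOutputConsuming Cf).Reachable (Cf.init x) v) :
    ∃ o, (removeOutputConsuming Cf).Reachable v o ∧ o Cf.output = f x := by
  induction h : f x - v Cf.output using Nat.strong_induction_on generalizing v with
  | _ k ih =>
    rcases (output_le_of_reachable_removeOutputConsuming hD hv).lt_or_eq with hlt | heq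
    · obtain ⟨v', hvv', hgt⟩ := exists_reachable_removeOutputConsuming_output_gt hD hv hlt
      obtain ⟨o, ho, hox⟩ := ih _ (by omega) (hv.trans hvv') rfl
      exact ⟨o, hvv'.trans ho, hox⟩
    · exact ⟨v, .refl, heq⟩

end Composable

theorem composable_implies_outputOblivious_general {d : ℕ} {σf : Type} [Fintype σf]
    [DecidableEq σf] (Cf : CRN d σf) (f : (Fin d → ℕ) → ℕ)
    (hcomp : ∀ (σg : Type) [Fintype σg] [DecidableEq σg] (Cg : CRN 1 σg)
      (g : ℕ → ℕ), Cg.StablyComputes (fun x : Fin 1 → ℕ => g (x 0)) →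
        (concatCRN Cf Cg).StablyComputes fun x => g (f x)) :
    (removeOutputConsuming Cf).StablyComputes f ∧
      (removeOutputConsuming Cf).OutputOblivious := by
  have hD : (concatCRN Cf CRN.identity).StablyComputes f :=
    hcomp (Fin 3) CRN.identity id CRN.identity_stablyComputes
  refine ⟨fun x c hc => ?_, CRN.removeOutputConsuming_outputOblivious Cf⟩
  obtain ⟨o, hco, hox⟩ := exists_reachable_removeOutputConsuming_output_eq hD hc
  refine ⟨o, hco, fun c' hoc' => ?_, hox⟩
  have hle := output_le_of_reachable_removeOutputConsuming hD ((hc.trans hco).trans hoc')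
  have hge := hoc'.output_le (CRN.removeOutputConsuming_outputOblivious Cf)
  exact le_antisymm (hox ▸ hle) hge

/-- If `Cf` stably computes `f` and for every CRN `Cg` stably computing some
`g : ℕ → ℕ` the concatenated CRN stably computes `g ∘ f`, then deleting from `Cf`
every reaction whose reactants include the output species yields a CRN that still
stably computes `f` (and is output-oblivious). -/
theorem composable_implies_outputOblivious {d : ℕ} {σf : Type} [Fintype σf]
    [DecidableEq σf] (Cf : CRN d σf) (f : (Fin d → ℕ) → ℕ)
    (hf : Cf.StablyComputes f)
    (hcomp : ∀ (σg : Type) [Fintype σg] [DecidableEq σg] (Cg : CRN 1 σg)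
      (g : ℕ → ℕ), Cg.StablyComputes (fun x : Fin 1 → ℕ => g (x 0)) →
        (concatCRN Cf Cg).StablyComputes fun x => g (f x)) :
    (removeOutputConsuming Cf).StablyComputes f ∧
      (removeOutputConsuming Cf).OutputOblivious :=
  composable_implies_outputOblivious_general Cf f hcomp
end
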